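/- Let A be a gentle algebra and let w, v be strings with v = V_α α v₀ for some arrow α and string v₀, where N_α = V_α α U_α is the unique string starting in a deep and ending on a peak with U_α, V_α inverse strings. Let p = (D,E,F) × (D',E',F') ∈ F(v) × S(w) be an admissible pair with DE = V_α and l(E) > 0. If either (E = E' and l(F') > 0) or (E⁻¹ = E' and l(D') > 0), then the canonical homomorphism f_p : M(v) → M(w) factors through a projective A-module. -/

import Mathlib

open Classical

noncomputable section

/-- A quiver with a set of monomial relations (paths that are declared to lie in the
admissible monomial ideal `I`).  `kQ/I` is the corresponding algebra. -/
structure GQ : Type 1 where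
  V : Type
  A : Type
  s : A → V
  t : A → V
  rel : List A → Prop
  rel_path : ∀ p, rel p → List.Chain' (fun a b => t a = s b) p ∧ 2 ≤ p.length

/-- Letters of strings: arrows and formal inverses of arrows. -/
inductive Letter (G : GQ) : Type
  | ar : G.A → Letter G
  | inv : G.A → Letter G

namespace Letter

variable {G : GQ}

def src : Letter G → G.V
  | .ar a => G.s a
  | .inv a => G.t a

def tgt : Letter G → G.V
  | .ar a => G.t a
  | .inv a => G.s a

def flip : Letter G → Letter G
  | .ar a => .inv a
  | .inv a => .ar a

end Letter

/-- The formal inverse of a word. -/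
def strInv {G : GQ} (w : List (Letter G)) : List (Letter G) :=
  (w.map Letter.flip).reverse

namespace GQ

variable (G : GQ)

/-- Two consecutive letters fit together and are not mutually inverse. -/
def Ok (l l' : Letter G) : Prop := l.tgt = l'.src ∧ l' ≠ l.flip

/-- `w` is a string word: consecutive letters are composable, not mutually inverse, and no
direct subword nor the inverse of a direct subword lies in the ideal `I`. -/
def IsStringWord (w : List (Letter G)) : Prop :=
  List.Chain' G.Ok w ∧
  ∀ p : List G.A, G.rel p →
    ¬ (p.map Letter.ar <:+: w) ∧ ¬ (strInv (p.map Letter.ar) <:+: w)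

/-- The end vertex of a word with specified starting vertex `s₀`. -/
def endVtx (s₀ : G.V) (w : List (Letter G)) : G.V :=
  match w.getLast? with
  | some l => l.tgt
  | none => s₀

/-- Starting vertex of a word, with default for the empty word. -/
def wordSrc (dflt : G.V) (w : List (Letter G)) : G.V :=
  match w.head? with
  | some l => l.src
  | none => dflt

/-- A string over `A = kQ/I`, given as a word together with its starting vertex
(the latter being the only data for strings of length `0`). -/
def GoodStr (s₀ : G.V) (w : List (Letter G)) : Prop :=
  G.IsStringWord w ∧ ∀ l ∈ w.head?, Letter.src l = s₀

/-- The vertex at position `n` (`0 ≤ n ≤ length w`) on the walk `w`. -/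
def vtxN (s₀ : G.V) (w : List (Letter G)) (n : ℕ) : G.V :=
  match (w.drop n).head? with
  | some l => l.src
  | none => G.endVtx s₀ w

/-- Conditions (G1) and (G2): `kQ/I` is a string algebra. -/
def IsStringAlg : Prop :=
  (∀ v : G.V, ∀ a b c : G.A, G.s a = v → G.s b = v → G.s c = v → a = b ∨ a = c ∨ b = c) ∧
  (∀ v : G.V, ∀ a b c : G.A, G.t a = v → G.t b = v → G.t c = v → a = b ∨ a = c ∨ b = c) ∧
  (∀ a b c : G.A, G.t a = G.s b → G.t a = G.s c → ¬ G.rel [a, b] → ¬ G.rel [a, c] → b = c) ∧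
  (∀ a b c : G.A, G.t b = G.s a → G.t c = G.s a → ¬ G.rel [b, a] → ¬ G.rel [c, a] → b = c)

/-- `kQ/I` is a finite-dimensional gentle algebra: (G1)-(G4) plus finiteness
of the set of paths avoiding the relations. -/
def IsGentle : Prop :=
  G.IsStringAlg ∧
  (∀ p, G.rel p → p.length = 2) ∧
  (∀ a b c : G.A, G.rel [a, b] → G.rel [a, c] → b = c) ∧
  (∀ a b c : G.A, G.rel [b, a] → G.rel [c, a] → b = c) ∧
  {p : List G.A | List.Chain' (fun a b => G.t a = G.s b) p ∧ ∀ q, G.rel q → ¬ q <:+: p}.Finite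

/-- `(D,E,F)` is a factor string of `v`. -/
def FactorTriple (v D E F : List (Letter G)) : Prop :=
  v = D ++ E ++ F ∧
  (D = [] ∨ ∃ a, D.getLast? = some (Letter.inv a)) ∧
  (F = [] ∨ ∃ a, F.head? = some (Letter.ar a))

/-- `(D,E,F)` is a substring of `w`. -/
def SubTriple (w D E F : List (Letter G)) : Prop :=
  w = D ++ E ++ F ∧
  (D = [] ∨ ∃ a, D.getLast? = some (Letter.ar a)) ∧
  (F = [] ∨ ∃ a, F.head? = some (Letter.inv a))

/-- An admissible pair `(D,E,F) × (D',E',F') ∈ F(v) × S(w)`. -/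
def AdPair (s₀v : G.V) (v : List (Letter G)) (s₀w : G.V) (w : List (Letter G))
    (D E F D' E' F' : List (Letter G)) : Prop :=
  G.FactorTriple v D E F ∧ G.SubTriple w D' E' F' ∧
  (E' = E ∨ E' = strInv E) ∧
  (E = [] → G.vtxN s₀v v D.length = G.vtxN s₀w w D'.length)

/-- A one-sided admissible pair. -/
def OneSided (D E F D' E' F' : List (Letter G)) : Prop :=
  (E' = E ∧ ((D = [] ∧ D' = []) ∨ (F = [] ∧ F' = []))) ∨
  (E' = strInv E ∧ ((D = [] ∧ F' = []) ∨ (F = [] ∧ D' = [])))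

/-- The strings `w`, `v` have extensions from `w` to `v`: (E1), (E2) or (E3). -/
def HasExt (s₀w : G.V) (w : List (Letter G)) (s₀v : G.V) (v : List (Letter G)) : Prop :=
  (∃ a : G.A, G.s a = G.endVtx s₀w w ∧
    ((G.t a = s₀v ∧ G.IsStringWord (w ++ Letter.ar a :: v)) ∨
     (G.t a = G.endVtx s₀v v ∧ G.IsStringWord (w ++ Letter.ar a :: strInv v)))) ∨
  (∃ b : G.A, G.s b = s₀w ∧
    ((G.t b = s₀v ∧ G.IsStringWord (strInv w ++ Letter.ar b :: v)) ∨
     (G.t b = G.endVtx s₀v v ∧ G.IsStringWord (strInv w ++ Letter.ar b :: strInv v)))) ∨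
  (∃ D E F D' E' F', G.AdPair s₀v v s₀w w D E F D' E' F' ∧ ¬ G.OneSided D E F D' E' F')

/-- `w` does not start on a peak iff some arrow can be added in front. -/
def StartsOnPeak (s₀ : G.V) (w : List (Letter G)) : Prop :=
  ¬ ∃ a : G.A, G.t a = s₀ ∧ G.IsStringWord (Letter.ar a :: w)

def EndsOnPeak (s₀ : G.V) (w : List (Letter G)) : Prop :=
  ¬ ∃ b : G.A, G.t b = G.endVtx s₀ w ∧ G.IsStringWord (w ++ [Letter.inv b])

def StartsInDeep (s₀ : G.V) (w : List (Letter G)) : Prop :=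
  ¬ ∃ b : G.A, G.s b = s₀ ∧ G.IsStringWord (Letter.inv b :: w)

def EndsInDeep (s₀ : G.V) (w : List (Letter G)) : Prop :=
  ¬ ∃ a : G.A, G.s a = G.endVtx s₀ w ∧ G.IsStringWord (w ++ [Letter.ar a])

def IsDirectWord (w : List (Letter G)) : Prop := ∀ l ∈ w, ∃ a, l = Letter.ar a

def IsInverseWord (w : List (Letter G)) : Prop := ∀ l ∈ w, ∃ a, l = Letter.inv a

/-- `N_a = V_a · a · U_a` is the unique string with `U_a`, `V_a` inverse strings which starts
in a deep and ends on a peak. -/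
def NCond (a : G.A) (Va Ua : List (Letter G)) : Prop :=
  G.IsInverseWord Va ∧ G.IsInverseWord Ua ∧
  G.IsStringWord (Va ++ Letter.ar a :: Ua) ∧
  G.StartsInDeep (G.wordSrc (G.s a) Va) (Va ++ Letter.ar a :: Ua) ∧
  G.EndsOnPeak (G.wordSrc (G.s a) Va) (Va ++ Letter.ar a :: Ua)

/-- A band. -/
def IsBand (s₀ : G.V) (w : List (Letter G)) : Prop :=
  G.GoodStr s₀ w ∧ w ≠ [] ∧ G.endVtx s₀ w = s₀ ∧
  (∀ n : ℕ, G.IsStringWord (List.flatten (List.replicate n w))) ∧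
  ¬ ∃ u : List (Letter G), ∃ m : ℕ, 2 ≤ m ∧ w = List.flatten (List.replicate m u)

end GQ

/-- A representation of the quiver `Q` over `k`; modules over `kQ/I` are the representations
satisfying the relations (`SatRel` below). -/
structure Repn (G : GQ) (k : Type) [Field k] : Type 1 where
  V : G.V → Type
  acg : ∀ i, AddCommGroup (V i)
  mod : ∀ i, Module k (V i)
  f : ∀ a : G.A, V (G.s a) →ₗ[k] V (G.t a)

attribute [instance] Repn.acg Repn.mod

variable {k : Type} [Field k] {G : GQ}

/-- Apply the maps of a representation along a path of arrows. -/
def Repn.appPath (R : Repn G k) : List G.A → (Σ i, R.V i) → (Σ i, R.V i)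
  | [], x => x
  | a :: p, ⟨i, x⟩ =>
      Repn.appPath R p ⟨G.t a, if h : i = G.s a then R.f a (cast (congrArg R.V h) x) else 0⟩

/-- The representation satisfies the relations, i.e. is a module over `kQ/I`. -/
def SatRel (R : Repn G k) : Prop :=
  ∀ p, G.rel p → ∀ x : Σ i, R.V i, (R.appPath p x).2 = 0

/-- Morphisms of representations. -/
structure RepHom (M N : Repn G k) : Type where
  app : ∀ i, M.V i →ₗ[k] N.V i
  comm : ∀ (a : G.A) (x : M.V (G.s a)), app (G.t a) (M.f a x) = N.f a (app (G.s a) x)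

def RepHom.comp {M N P : Repn G k} (g : RepHom N P) (f : RepHom M N) : RepHom M P where
  app i := (g.app i).comp (f.app i)
  comm a x := by
    simp only [LinearMap.comp_apply]
    rw [f.comm, g.comm]

/-- `0 → M → E → N → 0` is a short exact sequence of representations. -/
def IsSES {M E N : Repn G k} (ι : RepHom M E) (π : RepHom E N) : Prop :=
  (∀ i, Function.Injective (ι.app i)) ∧ (∀ i, Function.Surjective (π.app i)) ∧
  (∀ i, LinearMap.range (ι.app i) = LinearMap.ker (π.app i))

def Splits {E N : Repn G k} (π : RepHom E N) : Prop :=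
  ∃ σ : RepHom N E, ∀ i x, (π.app i) ((σ.app i) x) = x

/-- `Ext¹_A(M, N) ≠ 0`: there is a non-split extension `0 → N → E → M → 0` of
`A = kQ/I`-modules. -/
def Ext1Nonzero (M N : Repn G k) : Prop :=
  ∃ (E : Repn G k) (ι : RepHom N E) (π : RepHom E M),
    SatRel E ∧ IsSES ι π ∧ ¬ Splits π

def IsIso {M N : Repn G k} (φ : RepHom M N) : Prop := ∀ i, Function.Bijective (φ.app i)

def RepIso (M N : Repn G k) : Prop := ∃ φ : RepHom M N, IsIso φ

def IsZeroHom {M N : Repn G k} (φ : RepHom M N) : Prop := ∀ i x, φ.app i x = 0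

/-- Projective module over `kQ/I`. -/
def IsProjectiveRep (P : Repn G k) : Prop :=
  SatRel P ∧ ∀ (X Y : Repn G k), SatRel X → SatRel Y →
    ∀ (e : RepHom X Y), (∀ i, Function.Surjective (e.app i)) →
    ∀ (g : RepHom P Y), ∃ h : RepHom P X, ∀ i x, (e.app i) ((h.app i) x) = g.app i x

/-- Injective module over `kQ/I`. -/
def IsInjectiveRep (I : Repn G k) : Prop :=
  SatRel I ∧ ∀ (X Y : Repn G k), SatRel X → SatRel Y →
    ∀ (m : RepHom X Y), (∀ i, Function.Injective (m.app i)) →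
    ∀ (g : RepHom X I), ∃ h : RepHom Y I, ∀ i x, (h.app i) ((m.app i) x) = g.app i x

def FactorsThroughProj {M N : Repn G k} (φ : RepHom M N) : Prop :=
  ∃ (P : Repn G k) (g : RepHom M P) (h : RepHom P N), IsProjectiveRep P ∧
    ∀ i x, (h.app i) ((g.app i) x) = φ.app i x

/-- Indecomposability: nonzero, and every idempotent endomorphism is `0` or `1`. -/
def Indec (M : Repn G k) : Prop :=
  (∃ i, ∃ x : M.V i, x ≠ 0) ∧
  ∀ e : RepHom M M, (∀ i x, e.app i (e.app i x) = e.app i x) →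
    (∀ i x, e.app i x = x) ∨ (∀ i x, e.app i x = 0)

/-- Direct sum of two representations. -/
def dsum (M N : Repn G k) : Repn G k where
  V i := M.V i × N.V i
  acg _ := inferInstance
  mod _ := inferInstance
  f a := (M.f a).prodMap (N.f a)

/-- An Auslander-Reiten (almost split) sequence `0 → M → E → N → 0`. -/
def IsARSeq {M E N : Repn G k} (ι : RepHom M E) (π : RepHom E N) : Prop :=
  IsSES ι π ∧ ¬ Splits π ∧
  (∀ (Z : Repn G k), SatRel Z → ∀ g : RepHom Z N,
      (¬ ∃ σ : RepHom N Z, ∀ i x, (g.app i) ((σ.app i) x) = x) →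
      ∃ h : RepHom Z E, ∀ i x, (π.app i) ((h.app i) x) = g.app i x) ∧
  (∀ (Z : Repn G k), SatRel Z → ∀ g : RepHom M Z,
      (¬ ∃ σ : RepHom Z M, ∀ i x, (σ.app i) ((g.app i) x) = x) →
      ∃ h : RepHom E Z, ∀ i x, (h.app i) ((ι.app i) x) = g.app i x)

namespace GQ

/-- Position `p` is sent to position `q` by the arrow `a` in the string module of `w`. -/
def Link (G : GQ) (w : List (Letter G)) (a : G.A) (p q : ℕ) : Prop :=
  (∃ m : Fin w.length, w.get m = Letter.ar a ∧ p = (m : ℕ) ∧ q = (m : ℕ) + 1) ∨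
  (∃ m : Fin w.length, w.get m = Letter.inv a ∧ q = (m : ℕ) ∧ p = (m : ℕ) + 1)

end GQ

/-- The string module `M(w)` as a representation of `Q`. -/
def stringRep (k : Type) [Field k] (G : GQ) (s₀ : G.V) (w : List (Letter G)) : Repn G k where
  V i := {j : Fin (w.length + 1) // G.vtxN s₀ w (j : ℕ) = i} → k
  acg _ := inferInstance
  mod _ := inferInstance
  f a :=
    { toFun := fun x q =>
        if h : ∃ p : {j : Fin (w.length + 1) // G.vtxN s₀ w (j : ℕ) = G.s a},
            G.Link w a (p.1 : ℕ) (q.1 : ℕ)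
        then x h.choose else 0
      map_add' := by
        intro x y
        funext q
        by_cases h : ∃ p : {j : Fin (w.length + 1) // G.vtxN s₀ w (j : ℕ) = G.s a},
            G.Link w a (p.1 : ℕ) (q.1 : ℕ)
        · simp only [dif_pos h, Pi.add_apply]
        · simp only [dif_neg h, Pi.add_apply, add_zero]
      map_smul' := by
        intro c x
        funext q
        by_cases h : ∃ p : {j : Fin (w.length + 1) // G.vtxN s₀ w (j : ℕ) = G.s a},
            G.Link w a (p.1 : ℕ) (q.1 : ℕ)
        · simp only [dif_pos h, Pi.smul_apply, RingHom.id_apply, smul_eq_mul]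
        · simp only [dif_neg h, Pi.smul_apply, RingHom.id_apply, smul_zero] }

/-- The dimension vector of the string module of `w`. -/
def dimVec (G : GQ) (s₀ : G.V) (w : List (Letter G)) (i : G.V) : ℕ :=
  Nat.card {j : Fin (w.length + 1) // G.vtxN s₀ w (j : ℕ) = i}

/-- The dimension vector of a representation. -/
def repDim (M : Repn G k) (i : G.V) : ℕ := Module.finrank k (M.V i)

/-- `φ` is the canonical homomorphism `f_p : M(v) → M(w)` attached to an admissible pair
whose `E`-part sits at positions `lD, …, lD + lE` of `v` and `lD', …, lD' + lE` of `w`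
(`rev` records whether the identification reverses orientation). -/
def CanonicalApp (k : Type) [Field k] (G : GQ) (s₀v : G.V) (v : List (Letter G))
    (s₀w : G.V) (w : List (Letter G)) (lD lD' lE : ℕ) (rev : Bool)
    (φ : RepHom (stringRep k G s₀v v) (stringRep k G s₀w w)) : Prop :=
  ∀ (i : G.V) (x : (stringRep k G s₀v v).V i)
    (q : {j : Fin (w.length + 1) // G.vtxN s₀w w (j : ℕ) = i}),
    φ.app i x q =
      if h : ∃ p : {j : Fin (v.length + 1) // G.vtxN s₀v v (j : ℕ) = i},
          lD' ≤ (q.1 : ℕ) ∧ (q.1 : ℕ) ≤ lD' + lE ∧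
          (p.1 : ℕ) = (if rev then lD + (lE - ((q.1 : ℕ) - lD')) else lD + ((q.1 : ℕ) - lD'))
      then x h.choose else 0

/-- Combinatorial interface for a triangulated unpunctured marked surface `(S,M)` with a
triangulation `Γ` and the associated gentle (Jacobian) algebra `G_Γ`. -/
structure SurfData : Type 1 where
  /-- homotopy classes of non-contractible curves between marked points -/
  Curve : Type
  /-- minimal intersection numbers -/
  Int : Curve → Curve → ℕ
  Int_symm : ∀ γ δ, Int γ δ = Int δ γ
  /-- arcs = curves without self-intersections -/
  IsArc : Curve → Prop
  arc_self : ∀ γ, IsArc γ → Int γ γ = 0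
  /-- the triangulation -/
  Γ : Finset Curve
  Γ_arc : ∀ τ ∈ Γ, IsArc τ
  Γ_compat : ∀ τ ∈ Γ, ∀ τ' ∈ Γ, Int τ τ' = 0
  /-- Mosher's theorem: an arc is determined by its intersection numbers with `Γ` -/
  arc_unique : ∀ γ δ, IsArc γ → IsArc δ → (∀ τ ∈ Γ, Int γ τ = Int δ τ) → γ = δ
  /-- the triangles of `Γ` -/
  Tri : Type
  /-- the three sides of each triangle -/
  side : Tri → Fin 3 → Curve
  /-- the sequence `Δ₀^γ, …, Δ_d^γ` of triangles traversed by a curve `γ ∉ Γ` -/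
  trav : Curve → List Tri
  /-- the sequence `τ_{i_1}, …, τ_{i_d}` of arcs of `Γ` crossed by `γ` -/
  cross : Curve → List Curve
  cross_mem : ∀ γ, ∀ τ ∈ cross γ, τ ∈ Γ
  cross_sum : ∀ γ, γ ∉ Γ → (cross γ).length = ∑ τ ∈ Γ, Int γ τ
  trav_len : ∀ γ, γ ∉ Γ → (trav γ).length = (cross γ).length + 1
  /-- the restriction `γ' = γ|_{[r₁,r_d]}` intersects the initial segment `γ₀` -/
  restrMeetsStart : Curve → Prop
  /-- the restriction `γ'` intersects the final segment `γ_d` -/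
  restrMeetsEnd : Curve → Prop
  /-- the gentle Jacobian algebra `G_Γ` -/
  G : GQ
  G_gentle : G.IsGentle
  /-- vertices of `Q_Γ` are the internal arcs of `Γ` -/
  vtxArc : G.V → Curve
  vtxArc_mem : ∀ i, vtxArc i ∈ Γ
  vtxArc_inj : Function.Injective vtxArc
  /-- the string `w_Γ^γ` associated to a curve `γ ∉ Γ` -/
  strSrc : Curve → G.V
  strW : Curve → List (Letter G)
  str_good : ∀ γ, γ ∉ Γ → G.GoodStr (strSrc γ) (strW γ)
  str_dim : ∀ γ, γ ∉ Γ → ∀ i, dimVec G (strSrc γ) (strW γ) i = Int γ (vtxArc i)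
  str_surj : ∀ s₀ w, G.GoodStr s₀ w → ∃ γ, γ ∉ Γ ∧ strSrc γ = s₀ ∧ strW γ = w
  str_inj : ∀ γ δ, γ ∉ Γ → δ ∉ Γ → strW γ = strW δ → strSrc γ = strSrc δ → γ = δ

end

/-!
Write `v = D E α v₀`, where `D E = V_α = c₁⁻¹ ⋯ c_t⁻¹` is an inverse string, and let `β` be the
arrow of `w` just outside `E'` at the image of the end of `E` (`F' = β⁻¹ ⋯` if `E' = E`,
`D' = ⋯ β` if `E' = E⁻¹`). Sending the basis vector `x_p` of `M(v)` to the path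
`β c_t ⋯ c_{p+1}` for `p ≤ t`, and to `0` beyond `t`, is a homomorphism `M(v) → P(s β)` into the
indecomposable projective: these paths are nonzero because `V_α` is a string and `β c_t` is read
in `w`; by gentleness, `β c_t ≠ 0` forces `β α = 0`, and each path `β c_t ⋯ c_{p+1}` can only be
prolonged by `c_p`, and not at all for `p = 0`, since `N_α` starts in a deep. Composing with the
homomorphism `P(s β) → M(w)` sending the trivial path to the basis vector at the source of `β`
gives back `f_p`: the path `β c_t ⋯ c_{p+1}` walks through `w` along `E'`, and dies once it
leaves `E'`, because no arrow of `w` leaves the image of the start of `E`.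
-/

noncomputable section

namespace Letter

variable {G : GQ}

def arrow : Letter G → G.A
  | .ar a => a
  | .inv a => a

@[simp] theorem arrow_inv (a : G.A) : (Letter.inv a : Letter G).arrow = a := rfl

end Letter

theorem List.pair_infix_of_getElem {α : Type*} {l : List α} {m : ℕ} (h : m + 1 < l.length) :
    [l[m], l[m + 1]] <:+: l := by
  refine List.infix_iff_getElem?.2 ⟨m, by simp; omega, fun i hi => ?_⟩
  simp only [List.length_cons, List.length_nil] at hi
  interval_cases i <;> simp [Nat.add_comm]

theorem getElem?_strInv {G : GQ} {E : List (Letter G)} {j : ℕ} (hj : j < E.length) :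
    (strInv E)[j]? = E[E.length - 1 - j]?.map Letter.flip := by
  rw [strInv, List.getElem?_reverse (by simpa using hj), List.getElem?_map, List.length_map]

/-! ### Strings as walks -/

namespace GQ

variable {G : GQ} {w : List (Letter G)}

theorem vtxN_of_lt (s₀ : G.V) {n : ℕ} (hn : n < w.length) : G.vtxN s₀ w n = w[n].src := by
  rw [vtxN, List.head?_drop, List.getElem?_eq_getElem hn]

theorem vtxN_succ (s₀ : G.V) (hw : List.IsChain G.Ok w) {n : ℕ} (hn : n < w.length) :
    G.vtxN s₀ w (n + 1) = w[n].tgt := by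
  by_cases h : n + 1 < w.length
  · rw [vtxN_of_lt s₀ h]
    exact (List.isChain_iff_getElem.1 hw n h).1.symm
  · rw [vtxN, List.head?_drop, List.getElem?_eq_none (by omega), endVtx,
      List.getLast?_eq_getElem?, show w.length - 1 = n by omega, List.getElem?_eq_getElem hn]

theorem getElem_succ_ne_flip (hw : List.IsChain G.Ok w) {n : ℕ} (hn : n + 1 < w.length) :
    w[n + 1] ≠ w[n].flip :=
  (List.isChain_iff_getElem.1 hw n hn).2

theorem link_of_getElem?_eq_ar {m : ℕ} {a : G.A} (h : w[m]? = some (.ar a)) :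
    G.Link w a m (m + 1) :=
  have ⟨hm, h⟩ := List.getElem_of_getElem? h
  Or.inl ⟨⟨m, hm⟩, h, rfl, rfl⟩

theorem link_of_getElem?_eq_inv {m : ℕ} {a : G.A} (h : w[m]? = some (.inv a)) :
    G.Link w a (m + 1) m :=
  have ⟨hm, h⟩ := List.getElem_of_getElem? h
  Or.inr ⟨⟨m, hm⟩, h, rfl, rfl⟩

theorem not_link_of_sink {n : ℕ} (hout : ∀ c, w[n]? ≠ some (.ar c))
    (hin : ∀ m c, n = m + 1 → w[m]? ≠ some (.inv c)) {a : G.A} {q : ℕ} : ¬ G.Link w a n q := by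
  rintro (⟨m, hm, rfl, rfl⟩ | ⟨m, hm, rfl, rfl⟩)
  · exact hout a (by simp [← hm])
  · exact hin m a rfl (by simp [← hm])

namespace Link

variable {a : G.A} {p q : ℕ}

theorem le_length (h : G.Link w a p q) : p ≤ w.length ∧ q ≤ w.length := by
  rcases h with ⟨m, -, rfl, rfl⟩ | ⟨m, -, rfl, rfl⟩ <;> omega

theorem vtxN_eq (s₀ : G.V) (hw : List.IsChain G.Ok w) (h : G.Link w a p q) :
    G.vtxN s₀ w p = G.s a ∧ G.vtxN s₀ w q = G.t a := by
  rcases h with ⟨m, hm, rfl, rfl⟩ | ⟨m, hm, rfl, rfl⟩ <;> rw [List.get_eq_getElem] at hm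
  · rw [vtxN_of_lt s₀ m.isLt, vtxN_succ s₀ hw m.isLt, hm]; exact ⟨rfl, rfl⟩
  · rw [vtxN_of_lt s₀ m.isLt, vtxN_succ s₀ hw m.isLt, hm]; exact ⟨rfl, rfl⟩

theorem left_unique (hw : List.IsChain G.Ok w) {p' : ℕ} (h : G.Link w a p q)
    (h' : G.Link w a p' q) : p = p' := by
  rcases h with ⟨m, hm, rfl, rfl⟩ | ⟨m, hm, rfl, rfl⟩ <;>
    rcases h' with ⟨m', hm', rfl, he⟩ | ⟨m', hm', he, rfl⟩ <;>
    rw [List.get_eq_getElem] at hm hm' <;> try omega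
  · have := getElem_succ_ne_flip hw (n := m) (by omega)
    simp only [show (m : ℕ) + 1 = m' by omega, hm, hm'] at this
    exact absurd rfl this
  · have := getElem_succ_ne_flip hw (n := m') (by omega)
    simp only [show (m' : ℕ) + 1 = m by omega, hm, hm'] at this
    exact absurd rfl this

theorem right_unique (hw : List.IsChain G.Ok w) {q' : ℕ} (h : G.Link w a p q)
    (h' : G.Link w a p q') : q = q' := by
  rcases h with ⟨m, hm, rfl, rfl⟩ | ⟨m, hm, rfl, rfl⟩ <;>
    rcases h' with ⟨m', hm', he, rfl⟩ | ⟨m', hm', rfl, he⟩ <;>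
    rw [List.get_eq_getElem] at hm hm' <;> try omega
  · have := getElem_succ_ne_flip hw (n := m') (by omega)
    simp only [show (m' : ℕ) + 1 = m by omega, hm, hm'] at this
    exact absurd rfl this
  · have := getElem_succ_ne_flip hw (n := m) (by omega)
    simp only [show (m : ℕ) + 1 = m' by omega, hm, hm'] at this
    exact absurd rfl this

end Link

theorem IsStringWord.not_rel_of_link_of_link (hw : G.IsStringWord w) {a b : G.A} {n₁ n₂ n₃ : ℕ}
    (h₁ : G.Link w a n₁ n₂) (h₂ : G.Link w b n₂ n₃) : ¬ G.rel [a, b] := by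
  intro hrel
  rcases h₁ with ⟨m, hm, rfl, rfl⟩ | ⟨m, hm, rfl, rfl⟩ <;>
    rcases h₂ with ⟨m', hm', he, rfl⟩ | ⟨m', hm', rfl, he⟩ <;>
    rw [List.get_eq_getElem] at hm hm'
  · refine (hw.2 _ hrel).1 ?_
    have := List.pair_infix_of_getElem (l := w) (m := m) (by omega)
    simp only [show (m : ℕ) + 1 = m' by omega, hm, hm'] at this
    exact this
  · obtain rfl : m = m' := Fin.ext (by omega)
    exact nomatch hm.symm.trans hm'
  · obtain rfl : m = m' := Fin.ext (by omega)
    exact nomatch hm.symm.trans hm'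
  · refine (hw.2 _ hrel).2 ?_
    have := List.pair_infix_of_getElem (l := w) (m := m') (by omega)
    simp only [show (m' : ℕ) + 1 = m by omega, hm, hm'] at this
    exact this

theorem IsStringWord.not_rel_of_getElem_eq_inv (hv : G.IsStringWord v) {p : ℕ}
    (hp : p + 1 < v.length) {c c' : G.A} (hc : v[p] = .inv c) (hc' : v[p + 1] = .inv c') :
    ¬ G.rel [c', c] := fun hrel =>
  (hv.2 _ hrel).2 (by simpa [strInv, Letter.flip, hc, hc'] using List.pair_infix_of_getElem hp)

theorem IsStringWord.cons (hlen2 : ∀ p, G.rel p → p.length = 2) {l x : Letter G}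
    {u : List (Letter G)} (hu : G.IsStringWord (x :: u)) (hok : G.Ok l x)
    (hrel : ∀ z₁ z₂, G.rel [z₁, z₂] → [.ar z₁, .ar z₂] ≠ [l, x] ∧ [.inv z₂, .inv z₁] ≠ [l, x]) :
    G.IsStringWord (l :: x :: u) := by
  refine ⟨hu.1.cons_cons hok, fun q hq => ?_⟩
  obtain ⟨z₁, z₂, rfl⟩ := List.length_eq_two.1 (hlen2 q hq)
  have hpre : ∀ y₁ y₂ : Letter G, [y₁, y₂] <+: l :: x :: u → [y₁, y₂] = [l, x] := by
    simp [List.cons_prefix_cons]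
  constructor <;> intro hinf <;> rcases List.infix_cons_iff.1 hinf with h | h
  · exact (hrel z₁ z₂ hq).1 (hpre _ _ h)
  · exact (hu.2 _ hq).1 h
  · exact (hrel z₁ z₂ hq).2 (hpre _ _ (by simpa [strInv, Letter.flip] using h))
  · exact (hu.2 _ hq).2 h

/-- Otherwise `e⁻¹ N_a` would be a string, and `N_a` would not start in a deep. -/
theorem NCond.rel_of_head? (hlen2 : ∀ p, G.rel p → p.length = 2) {a : G.A}
    {Va Ua : List (Letter G)} (hN : G.NCond a Va Ua) {c e : G.A}
    (hc : Va.head? = some (.inv c)) (he : G.s e = G.t c) : G.rel [c, e] := by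
  obtain ⟨Va, rfl⟩ : ∃ Va', Va = .inv c :: Va' := by
    cases Va with
    | nil => simp at hc
    | cons x Va => simp only [List.head?_cons, Option.some.injEq] at hc; exact ⟨Va, hc ▸ rfl⟩
  by_contra hce
  refine hN.2.2.2.1 ⟨e, he, IsStringWord.cons hlen2 hN.2.2.1 (l := .inv e) ⟨he, nofun⟩ ?_⟩
  intro z₁ z₂ hz
  refine ⟨nofun, fun h => ?_⟩
  simp only [List.cons.injEq, Letter.inv.injEq, and_true] at h
  obtain ⟨rfl, rfl⟩ := h
  exact hce hz

theorem IsInverseWord.exists_getElem_eq_inv {v : List (Letter G)} {t : ℕ}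
    (hinv : G.IsInverseWord (v.take t)) {p : ℕ} (hpt : p < t) (hpv : p < v.length) :
    ∃ c, v[p] = .inv c :=
  hinv _ (List.mem_take_iff_getElem.2 ⟨p, by omega, rfl⟩)

theorem IsInverseWord.exists_head?_eq_inv_right {D E : List (Letter G)}
    (hinv : G.IsInverseWord (D ++ E)) (hE : E ≠ []) : ∃ c, E.head? = some (.inv c) := by
  obtain ⟨x, E, rfl⟩ := List.exists_cons_of_ne_nil hE
  obtain ⟨c, rfl⟩ := hinv x (by simp)
  exact ⟨c, rfl⟩

/-! ### Nonzero paths and back paths -/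

def pathEnd (i₀ : G.V) (r : List G.A) : G.V := (r.getLast?.map G.t).getD i₀

/-- `r` is a path of `Q` starting at `i₀` which is nonzero in `kQ/I`. -/
def IsPathFrom (i₀ : G.V) (r : List G.A) : Prop :=
  (∀ a ∈ r.head?, G.s a = i₀) ∧ List.IsChain (fun a b => G.t a = G.s b) r ∧
    ∀ q, G.rel q → ¬ q <:+: r

abbrev PathFromTo (i₀ j : G.V) : Type := {r : List G.A // G.IsPathFrom i₀ r ∧ G.pathEnd i₀ r = j}

@[simp] theorem pathEnd_nil (i₀ : G.V) : G.pathEnd i₀ [] = i₀ := rfl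

@[simp] theorem pathEnd_concat (i₀ : G.V) (r : List G.A) (e : G.A) :
    G.pathEnd i₀ (r ++ [e]) = G.t e := by
  simp [pathEnd]

theorem IsPathFrom.of_concat {i₀ : G.V} {r : List G.A} {e : G.A}
    (h : G.IsPathFrom i₀ (r ++ [e])) :
    G.IsPathFrom i₀ r ∧ G.pathEnd i₀ r = G.s e ∧ ∀ z ∈ r.getLast?, ¬ G.rel [z, e] := by
  obtain ⟨hhead, hchain, hrel⟩ := h
  obtain ⟨hchain₁, -, hjoin⟩ := List.isChain_append.1 hchain
  refine ⟨⟨fun a ha => hhead a ?_, hchain₁, fun q hq hinf => hrel q hq (hinf.trans ?_)⟩,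
    ?_, fun z hz hze => hrel _ hze ?_⟩
  · cases r <;> simp_all
  · exact ⟨[], [e], by simp⟩
  · rcases hr : r.getLast? with _ | z
    · rw [List.getLast?_eq_none_iff.1 hr] at hhead ⊢
      exact (hhead e rfl).symm
    · simpa [pathEnd, hr] using hjoin z hr e rfl
  · obtain ⟨r', rfl⟩ := List.getLast?_eq_some_iff.1 hz
    exact ⟨r', [], by simp⟩

theorem IsPathFrom.concat (hlen2 : ∀ p, G.rel p → p.length = 2) {i₀ : G.V} {r : List G.A}
    {e : G.A} (h : G.IsPathFrom i₀ r) (hend : G.pathEnd i₀ r = G.s e)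
    (hrel : ∀ z ∈ r.getLast?, ¬ G.rel [z, e]) : G.IsPathFrom i₀ (r ++ [e]) := by
  obtain ⟨hhead, hchain, hnorel⟩ := h
  refine ⟨fun a ha => ?_, List.isChain_append.2 ⟨hchain, List.isChain_singleton e, ?_⟩, ?_⟩
  · cases r with
    | nil => simp_all
    | cons x r => exact hhead a (by simpa using ha)
  · intro x hx y hy
    simp only [List.head?_cons, Option.mem_def, Option.some.injEq] at hy
    simp only [Option.mem_def] at hx
    subst hy
    simpa [pathEnd, hx] using hend
  · intro q hq hinf
    obtain ⟨q₁, q₂, rfl⟩ := List.length_eq_two.1 (hlen2 q hq)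
    rcases List.infix_concat_iff.1 hinf with hsuf | hinf
    · obtain ⟨t, ht, ⟨r', rfl⟩⟩ := (List.suffix_concat_iff.1 hsuf).resolve_left (by simp)
      obtain ⟨rfl, rfl⟩ : t = [q₁] ∧ q₂ = e := by
        rcases t with _ | ⟨x, _ | ⟨y, t⟩⟩ <;> simp_all
      exact hrel q₁ (by simp) hq
    · exact hnorel _ hq hinf

theorem finite_pathFromTo
    (hfin : {p : List G.A | List.IsChain (fun a b => G.t a = G.s b) p ∧
      ∀ q, G.rel q → ¬ q <:+: p}.Finite) (i₀ j : G.V) : Finite (G.PathFromTo i₀ j) :=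
  (hfin.subset fun _ hr => ⟨hr.1.2.1, hr.1.2.2⟩).to_subtype

section BackPath

variable {v : List (Letter G)} {t : ℕ}

/-- The path `β c_t ⋯ c_{p+1}` read backwards along `v` from position `t` to position `p`,
where `v[j] = c_{j+1}⁻¹`. -/
def backPath (β : G.A) (v : List (Letter G)) (t p : ℕ) : List G.A :=
  β :: ((v.take t).drop p).reverse.map Letter.arrow

variable {β : G.A}

@[simp] theorem backPath_self : backPath β v t t = [β] := by
  simp [backPath]

theorem backPath_of_lt {p : ℕ} (hp : p < t) (ht : t ≤ v.length) :
    backPath β v t p = backPath β v t (p + 1) ++ [v[p].arrow] := by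
  rw [backPath, backPath, List.drop_eq_getElem_cons (by simp; omega)]
  simp

theorem isPathFrom_backPath {s₀ : G.V} (hv : G.IsStringWord v) (ht : t ≤ v.length)
    (hinv : G.IsInverseWord (v.take t)) (hlen2 : ∀ p, G.rel p → p.length = 2)
    (ht0 : 0 < t) (hβ : G.t β = G.vtxN s₀ v t)
    (hβrel : ¬ G.rel [β, (v[t - 1]'(by omega)).arrow]) {p : ℕ} (hp : p ≤ t) :
    G.IsPathFrom (G.s β) (backPath β v t p) ∧
      G.pathEnd (G.s β) (backPath β v t p) = G.vtxN s₀ v p := by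
  induction hp using Nat.decreasingInduction with
  | self =>
    rw [backPath_self]
    refine ⟨⟨by simp, List.isChain_singleton β, fun q hq hinf => ?_⟩, by simp [pathEnd, hβ]⟩
    have := hinf.length_le
    have := (G.rel_path q hq).2
    simp at *; omega
  | of_succ p hpt ih =>
    obtain ⟨c, hc⟩ := hinv.exists_getElem_eq_inv hpt (by omega)
    rw [backPath_of_lt hpt ht, hc]
    refine ⟨ih.1.concat hlen2 (ih.2.trans ?_) fun z hz => ?_,
      by simp [vtxN_of_lt s₀ (show p < v.length by omega), hc]; rfl⟩
    · rw [vtxN_succ s₀ hv.1 (by omega), hc]; rfl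
    · rcases (show p + 1 = t ∨ p + 1 < t by omega) with hpt' | hpt'
      · subst hpt'
        simp only [backPath_self, List.getLast?_singleton, Option.mem_def,
          Option.some.injEq] at hz
        subst hz
        simpa [hc] using hβrel
      · obtain ⟨c', hc'⟩ := hinv.exists_getElem_eq_inv hpt' (by omega)
        rw [backPath_of_lt hpt' ht, hc'] at hz
        simp only [List.getLast?_concat, Option.mem_def, Option.some.injEq] at hz
        subst hz
        exact hv.not_rel_of_getElem_eq_inv (by omega) hc hc'

theorem exists_getElem_eq_inv_of_isPathFrom_backPath_concat {s₀ : G.V}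
    (hv : G.IsStringWord v) (ht : t ≤ v.length) (hinv : G.IsInverseWord (v.take t))
    (hG3 : ∀ a b c : G.A, G.t a = G.s b → G.t a = G.s c → ¬ G.rel [a, b] → ¬ G.rel [a, c] →
      b = c)
    (hdeep : ∀ c e, v.head? = some (.inv c) → G.s e = G.t c → G.rel [c, e])
    (ht0 : 0 < t) (hβ : G.t β = G.vtxN s₀ v t)
    (hβrel : ¬ G.rel [β, (v[t - 1]'(by omega)).arrow]) {p : ℕ} (hp : p ≤ t) {e : G.A}
    (he : G.IsPathFrom (G.s β) (backPath β v t p ++ [e])) :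
    ∃ h : 0 < p, v[p - 1]'(by omega) = .inv e := by
  obtain ⟨-, hend, hrel⟩ := he.of_concat
  have htgt : ∀ q (hq : 0 < q) (hqv : q ≤ v.length),
      G.vtxN s₀ v q = (v[q - 1]'(by omega)).tgt := fun q hq hqv => by
    simpa [Nat.sub_add_cancel hq] using vtxN_succ s₀ hv.1 (n := q - 1) (by omega)
  rcases hp.eq_or_lt with rfl | hpt
  · obtain ⟨c, hc⟩ := hinv.exists_getElem_eq_inv (p := p - 1) (by omega) (by omega)
    simp only [backPath_self, pathEnd, List.getLast?_singleton, Option.map_some,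
      Option.getD_some, Option.mem_def, Option.some.injEq, forall_eq'] at hend hrel
    refine ⟨ht0, ?_⟩
    -- gentleness: `β c` being nonzero, `c` is the only nonzero continuation of `β`
    rw [hc, hG3 β e c hend ?_ hrel (by simpa [hc] using hβrel)]
    rw [hβ, htgt p ht0 ht, hc]
    rfl
  · obtain ⟨c, hc⟩ := hinv.exists_getElem_eq_inv hpt (by omega)
    rw [backPath_of_lt hpt ht, hc] at hend hrel
    simp only [pathEnd_concat, Letter.arrow_inv, List.getLast?_concat, Option.mem_def,
      Option.some.injEq, forall_eq'] at hend hrel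
    rcases Nat.eq_zero_or_pos p with rfl | hp0
    -- at the start of `v` there is no continuation at all, as `v` starts in a deep
    · refine absurd (hdeep c e ?_ hend.symm) hrel
      rw [List.head?_eq_getElem?, List.getElem?_eq_getElem (by omega), hc]
    · obtain ⟨c', hc'⟩ := hinv.exists_getElem_eq_inv (p := p - 1) (by omega) (by omega)
      have hc₁ : v[p - 1 + 1] = .inv c := by simpa [Nat.sub_add_cancel hp0] using hc
      have hcc' : G.t c = G.s c' := by
        have := htgt p hp0 (by omega)
        rw [vtxN_of_lt s₀ (by omega), hc, hc'] at this
        exact this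
      refine ⟨hp0, ?_⟩
      -- as before, now with the nonzero path `c c'` read in the string `v`
      rw [hc', hG3 c e c' hend hcc' hrel (hv.not_rel_of_getElem_eq_inv (by omega) hc' hc₁)]

theorem backPath_eq_concat_of_link (ht : t ≤ v.length) (hinv : G.IsInverseWord (v.take t))
    (hnext : ∀ c, v[t]? ≠ some (.inv c)) {e : G.A} {n n' : ℕ} (h : G.Link v e n n')
    (hn' : n' ≤ t) : n = n' + 1 ∧ n' < t ∧ backPath β v t n' = backPath β v t n ++ [e] := by
  rcases h with ⟨m, hm, rfl, rfl⟩ | ⟨m, hm, rfl, rfl⟩ <;> rw [List.get_eq_getElem] at hm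
  · obtain ⟨c, hc⟩ := hinv.exists_getElem_eq_inv (p := m) (by omega) m.isLt
    exact nomatch hm.symm.trans hc
  · have hmt : (m : ℕ) < t := lt_of_le_of_ne hn' fun h =>
      hnext e (by rw [← h, List.getElem?_eq_getElem m.isLt, hm])
    exact ⟨rfl, hmt, by rw [backPath_of_lt hmt ht, hm]; rfl⟩

end BackPath

end GQ

/-! ### Representations -/

namespace Repn

variable {k : Type} [Field k] {G : GQ} (X : Repn G k)

/-- `σ` read at the vertex `j`: zero unless `σ` lives at `j`. -/
def component (j : G.V) (σ : Σ i, X.V i) : X.V j :=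
  if h : σ.1 = j then cast (congrArg X.V h) σ.2 else 0

theorem sigma_mk_eq (f : ∀ i, X.V i) {i j : G.V} (h : i = j) :
    (⟨i, f i⟩ : Σ i, X.V i) = ⟨j, f j⟩ := by
  subst h; rfl

@[simp] theorem component_mk (j : G.V) (x : X.V j) : X.component j ⟨j, x⟩ = x := by
  simp [component]

theorem component_eq_zero {j : G.V} {σ : Σ i, X.V i} (h : σ.2 = 0) : X.component j σ = 0 := by
  obtain ⟨i, x⟩ := σ
  unfold component
  split_ifs with hij
  · subst hij; exact h
  · rfl

theorem appPath_append (p q : List G.A) (σ : Σ i, X.V i) :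
    X.appPath (p ++ q) σ = X.appPath q (X.appPath p σ) := by
  induction p generalizing σ with
  | nil => rfl
  | cons a p ih => obtain ⟨i, x⟩ := σ; exact ih _

theorem appPath_singleton (a : G.A) (x : X.V (G.s a)) :
    X.appPath [a] ⟨G.s a, x⟩ = ⟨G.t a, X.f a x⟩ := by
  simp [appPath]

theorem appPath_singleton_of_ne (a : G.A) {i : G.V} (x : X.V i) (h : i ≠ G.s a) :
    X.appPath [a] ⟨i, x⟩ = ⟨G.t a, 0⟩ := by
  simp [appPath, h]

theorem appPath_snd_eq_zero (r : List G.A) {σ : Σ i, X.V i} (h : σ.2 = 0) :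
    (X.appPath r σ).2 = 0 := by
  induction r generalizing σ with
  | nil => exact h
  | cons a r ih =>
    obtain ⟨i, x⟩ := σ
    refine ih ?_
    dsimp only at h ⊢
    split_ifs with hi
    · subst hi; rw [h, cast_eq, map_zero]
    · rfl

theorem appPath_fst (i₀ : G.V) (r : List G.A) (x : X.V i₀) :
    (X.appPath r ⟨i₀, x⟩).1 = G.pathEnd i₀ r := by
  induction r using List.reverseRecOn with
  | nil => rfl
  | append_singleton r e _ =>
    rw [appPath_append, G.pathEnd_concat]
    obtain ⟨i, y⟩ := X.appPath r ⟨i₀, x⟩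
    rfl

theorem satRel_of_comp (hlen2 : ∀ p, G.rel p → p.length = 2)
    (h : ∀ a b, G.rel [a, b] → ∀ (hab : G.t a = G.s b) (x : X.V (G.s a)),
      X.f b (cast (congrArg X.V hab) (X.f a x)) = 0) :
    SatRel X := by
  intro p hp ⟨i, x⟩
  obtain ⟨a, b, rfl⟩ := List.length_eq_two.1 (hlen2 p hp)
  rw [show [a, b] = [a] ++ [b] from rfl, appPath_append]
  by_cases hi : i = G.s a
  · subst hi
    rw [appPath_singleton]
    by_cases hab : G.t a = G.s b
    · simp only [appPath, dif_pos hab]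
      exact h a b hp hab x
    · rw [appPath_singleton_of_ne _ _ _ hab]
  · rw [appPath_singleton_of_ne _ _ _ hi]
    exact appPath_snd_eq_zero _ _ rfl

theorem component_appPath_singleton (a : G.A) {σ : Σ i, X.V i} (h : σ.1 = G.s a) :
    X.component (G.t a) (X.appPath [a] σ) = X.f a (X.component (G.s a) σ) := by
  obtain ⟨i, x⟩ := σ
  dsimp only at h
  subst h
  rw [appPath_singleton, component_mk, component_mk]

theorem f_component_appPath_of_rel (hX : SatRel X) {z a : G.A} (hrel : G.rel [z, a])
    (hza : G.t z = G.s a) (σ : Σ i, X.V i) :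
    X.f a (X.component (G.s a) (X.appPath [z] σ)) = 0 := by
  obtain ⟨i, x⟩ := σ
  rw [← component_appPath_singleton _ _ (by rw [← hza]; rfl), ← appPath_append]
  exact component_eq_zero _ (hX _ hrel _)

end Repn

namespace RepHom

variable {k : Type} [Field k] {G : GQ} {X Y : Repn G k} (ψ : RepHom X Y)

theorem appPath_map (r : List G.A) (i : G.V) (x : X.V i) :
    Y.appPath r ⟨i, ψ.app i x⟩ =
      ⟨(X.appPath r ⟨i, x⟩).1, ψ.app _ (X.appPath r ⟨i, x⟩).2⟩ := by
  induction r generalizing i x with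
  | nil => rfl
  | cons a r ih =>
    have hstep : (if h : i = G.s a then Y.f a (cast (congrArg Y.V h) (ψ.app i x)) else 0) =
        ψ.app (G.t a) (if h : i = G.s a then X.f a (cast (congrArg X.V h) x) else 0) := by
      split_ifs with h
      · subst h; exact (ψ.comm a x).symm
      · exact (map_zero _).symm
    simp only [Repn.appPath, hstep]
    exact ih _ _

theorem component_map (j : G.V) (σ : Σ i, X.V i) :
    ψ.app j (X.component j σ) = Y.component j ⟨σ.1, ψ.app σ.1 σ.2⟩ := by
  obtain ⟨i, x⟩ := σ
  unfold Repn.component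
  split_ifs with h
  · subst h; rfl
  · exact map_zero _

end RepHom

/-! ### String modules -/

namespace GQ

abbrev Pos (G : GQ) (s₀ : G.V) (w : List (Letter G)) (i : G.V) : Type :=
  {j : Fin (w.length + 1) // G.vtxN s₀ w (j : ℕ) = i}

end GQ

section StringModule

variable {k : Type} [Field k] {G : GQ} {s₀ : G.V} {w : List (Letter G)}

variable (k s₀ w) in
/-- Defined at every vertex `i` (and zero unless `n` lies over `i`), so that
`⟨i, stringBasis k s₀ w n i⟩` can be transported along `i = j` by `Repn.sigma_mk_eq`. -/
def stringBasis (n : ℕ) (i : G.V) : (stringRep k G s₀ w).V i :=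
  fun q => if (q.1 : ℕ) = n then 1 else 0

theorem stringBasis_eq_single {i : G.V} (p : G.Pos s₀ w i) :
    stringBasis k s₀ w p.1 i = Pi.single p 1 := by
  funext q
  simp only [stringBasis, Pi.single_apply, Subtype.ext_iff, Fin.ext_iff]

theorem stringRep_linearMap_ext {M : Type} [AddCommGroup M] [Module k M] {i : G.V}
    {f g : (stringRep k G s₀ w).V i →ₗ[k] M}
    (h : ∀ p : G.Pos s₀ w i, f (stringBasis k s₀ w p.1 i) = g (stringBasis k s₀ w p.1 i)) :
    f = g :=
  (Pi.basisFun k _).ext fun p => by rw [Pi.basisFun_apply, ← stringBasis_eq_single]; exact h p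

theorem cast_stringRep_apply {i j : G.V} (h : i = j) (x : (stringRep k G s₀ w).V i)
    (q : G.Pos s₀ w j) :
    cast (congrArg (stringRep k G s₀ w).V h) x q = x ⟨q.1, q.2.trans h.symm⟩ := by
  subst h; rfl

theorem stringRep_f_apply (a : G.A) (x : (stringRep k G s₀ w).V (G.s a)) (q : G.Pos s₀ w (G.t a)) :
    (stringRep k G s₀ w).f a x q =
      if h : ∃ p : G.Pos s₀ w (G.s a), G.Link w a p.1 q.1 then x h.choose else 0 := rfl

theorem stringRep_f_stringBasis_of_link (hw : List.IsChain G.Ok w) {a : G.A} {n n' : ℕ}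
    (h : G.Link w a n n') :
    (stringRep k G s₀ w).f a (stringBasis k s₀ w n _) = stringBasis k s₀ w n' _ := by
  funext q
  rw [stringRep_f_apply]
  by_cases hq : (q.1 : ℕ) = n'
  · have hex : ∃ p : G.Pos s₀ w (G.s a), G.Link w a p.1 q.1 :=
      ⟨⟨⟨n, by have := h.le_length.1; omega⟩, (h.vtxN_eq s₀ hw).1⟩, hq ▸ h⟩
    rw [dif_pos hex, stringBasis, stringBasis, if_pos hq,
      if_pos (hex.choose_spec.left_unique hw (hq ▸ h))]
  · simp only [stringBasis, if_neg hq]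
    split_ifs with hex hn
    · exact absurd ((hn ▸ hex.choose_spec).right_unique hw h) hq
    · rfl
    · rfl

theorem stringRep_f_stringBasis_eq_zero {a : G.A} {n : ℕ} (h : ∀ n', ¬ G.Link w a n n') :
    (stringRep k G s₀ w).f a (stringBasis k s₀ w n _) = 0 := by
  funext q
  rw [stringRep_f_apply]
  simp only [stringBasis]
  split_ifs with hex hn
  · exact absurd (hn ▸ hex.choose_spec) (h _)
  · rfl
  · rfl

theorem appPath_stringBasis_of_link (hw : List.IsChain G.Ok w) {a : G.A} {n n' : ℕ}
    (h : G.Link w a n n') :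
    (stringRep k G s₀ w).appPath [a] ⟨G.vtxN s₀ w n, stringBasis k s₀ w n _⟩ =
      ⟨G.vtxN s₀ w n', stringBasis k s₀ w n' _⟩ := by
  obtain ⟨hs, ht⟩ := h.vtxN_eq s₀ hw
  rw [Repn.sigma_mk_eq _ (stringBasis k s₀ w n) hs, Repn.appPath_singleton,
    stringRep_f_stringBasis_of_link hw h, Repn.sigma_mk_eq _ (stringBasis k s₀ w n') ht.symm]

theorem appPath_stringBasis_snd_eq_zero {a : G.A} {n : ℕ} (h : ∀ n', ¬ G.Link w a n n')
    (i : G.V) : ((stringRep k G s₀ w).appPath [a] ⟨i, stringBasis k s₀ w n i⟩).2 = 0 := by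
  by_cases hi : i = G.s a
  · subst hi
    rw [Repn.appPath_singleton]
    exact stringRep_f_stringBasis_eq_zero h
  · rw [Repn.appPath_singleton_of_ne _ _ _ hi]

theorem satRel_stringRep (hlen2 : ∀ p, G.rel p → p.length = 2) (hw : G.IsStringWord w) :
    SatRel (stringRep k G s₀ w) := by
  refine Repn.satRel_of_comp _ hlen2 fun a b hab hab' x => funext fun q => ?_
  rw [stringRep_f_apply]
  split_ifs with hb
  · rw [cast_stringRep_apply hab', stringRep_f_apply, dif_neg]
    · rfl
    rintro ⟨p, hp⟩
    exact hw.not_rel_of_link_of_link hp hb.choose_spec hab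
  · rfl

end StringModule

/-! ### The indecomposable projectives `P(i)` -/

section PathModule

variable {k : Type} [Field k] {G : GQ} {i₀ : G.V}

variable (k) in
/-- The indecomposable projective `P(i₀)`, with the nonzero paths from `i₀` as basis. -/
def pathRep (i₀ : G.V) : Repn G k where
  V j := G.PathFromTo i₀ j → k
  acg _ := inferInstance
  mod _ := inferInstance
  f a :=
    { toFun := fun x r =>
        if h : ∃ r' : G.PathFromTo i₀ (G.s a), r.1 = r'.1 ++ [a] then x h.choose else 0
      map_add' := fun x y => funext fun r => by
        by_cases h : ∃ r' : G.PathFromTo i₀ (G.s a), r.1 = r'.1 ++ [a]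
        · simp only [dif_pos h, Pi.add_apply]
        · simp only [dif_neg h, Pi.add_apply, add_zero]
      map_smul' := fun c x => funext fun r => by
        by_cases h : ∃ r' : G.PathFromTo i₀ (G.s a), r.1 = r'.1 ++ [a]
        · simp only [dif_pos h, Pi.smul_apply, RingHom.id_apply, smul_eq_mul]
        · simp only [dif_neg h, Pi.smul_apply, RingHom.id_apply, smul_zero] }

variable (k i₀) in
def pathBasis (r : List G.A) (j : G.V) : (pathRep k i₀).V j :=
  fun r' => if r'.1 = r then 1 else 0

theorem pathBasis_eq_single {j : G.V} (r : G.PathFromTo i₀ j) :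
    pathBasis k i₀ r.1 j = Pi.single r 1 := by
  funext r'
  simp only [pathBasis, Pi.single_apply, Subtype.ext_iff]

theorem pathRep_f_apply (a : G.A) (x : (pathRep k i₀).V (G.s a)) (r : G.PathFromTo i₀ (G.t a)) :
    (pathRep k i₀).f a x r =
      if h : ∃ r' : G.PathFromTo i₀ (G.s a), r.1 = r'.1 ++ [a] then x h.choose else 0 := rfl

theorem cast_pathRep_apply {i j : G.V} (h : i = j) (x : (pathRep k i₀).V i)
    (r : G.PathFromTo i₀ j) :
    cast (congrArg (pathRep k i₀).V h) x r = x ⟨r.1, r.2.1, r.2.2.trans h.symm⟩ := by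
  subst h; rfl

theorem pathRep_f_pathBasis (a : G.A) (r : List G.A) :
    (pathRep k i₀).f a (pathBasis k i₀ r (G.s a)) =
      if G.IsPathFrom i₀ (r ++ [a]) then pathBasis k i₀ (r ++ [a]) (G.t a) else 0 := by
  funext r''
  rw [pathRep_f_apply]
  by_cases hval : G.IsPathFrom i₀ (r ++ [a])
  · rw [if_pos hval]
    simp only [pathBasis]
    by_cases hr : r''.1 = r ++ [a]
    · have hex : ∃ r' : G.PathFromTo i₀ (G.s a), r''.1 = r'.1 ++ [a] :=
        ⟨⟨r, hval.of_concat.1, hval.of_concat.2.1⟩, hr⟩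
      rw [dif_pos hex, if_pos hr,
        if_pos (List.append_cancel_right (hex.choose_spec.symm.trans hr))]
    · rw [if_neg hr]
      split_ifs with hex h
      · exact absurd (by rw [hex.choose_spec, h]) hr
      all_goals rfl
  · rw [if_neg hval]
    simp only [pathBasis]
    split_ifs with hex h
    · exact absurd (h ▸ hex.choose_spec ▸ r''.2.1) hval
    all_goals rfl

theorem satRel_pathRep (hlen2 : ∀ p, G.rel p → p.length = 2) : SatRel (pathRep k i₀) := by
  refine Repn.satRel_of_comp _ hlen2 fun a b hab hab' x => funext fun r => ?_
  rw [pathRep_f_apply]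
  split_ifs with hb
  · rw [cast_pathRep_apply hab', pathRep_f_apply, dif_neg]
    · rfl
    rintro ⟨r', hr'⟩
    exact r.2.1.2.2 _ hab ⟨r'.1, [], by rw [hb.choose_spec, hr']; simp⟩
  · rfl

theorem RepHom.apply_pathBasis {Y : Repn G k} (ψ : RepHom (pathRep k i₀) Y) (r : List G.A)
    {j : G.V} (hr : G.IsPathFrom i₀ r ∧ G.pathEnd i₀ r = j) :
    ψ.app j (pathBasis k i₀ r j) =
      Y.component j (Y.appPath r ⟨i₀, ψ.app i₀ (pathBasis k i₀ [] i₀)⟩) := by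
  induction r using List.reverseRecOn generalizing j with
  | nil =>
    obtain rfl : i₀ = j := hr.2
    exact (Y.component_mk _ _).symm
  | append_singleton r e ih =>
    obtain ⟨hr', hend, -⟩ := hr.1.of_concat
    obtain rfl : G.t e = j := (G.pathEnd_concat _ _ _).symm.trans hr.2
    have hbasis := pathRep_f_pathBasis (k := k) (i₀ := i₀) e r
    rw [if_pos hr.1] at hbasis
    rw [← hbasis, ψ.comm, ih ⟨hr', hend⟩, Y.appPath_append,
      Y.component_appPath_singleton _ ((Y.appPath_fst _ _ _).trans hend)]

variable [∀ j, Finite (G.PathFromTo i₀ j)] {X : Repn G k}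

theorem pathRep_linearMap_ext {M : Type} [AddCommGroup M] [Module k M] {j : G.V}
    {f g : (pathRep k i₀).V j →ₗ[k] M}
    (h : ∀ r : G.PathFromTo i₀ j, f (pathBasis k i₀ r.1 j) = g (pathBasis k i₀ r.1 j)) :
    f = g :=
  (Pi.basisFun k _).ext fun r => by rw [Pi.basisFun_apply, ← pathBasis_eq_single]; exact h r


namespace pathRep

def liftApp (ξ : X.V i₀) (j : G.V) : (pathRep k i₀).V j →ₗ[k] X.V j :=
  (Pi.basisFun k (G.PathFromTo i₀ j)).constr k fun r => X.component j (X.appPath r.1 ⟨i₀, ξ⟩)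

theorem liftApp_pathBasis (ξ : X.V i₀) {j : G.V} (r : G.PathFromTo i₀ j) :
    liftApp ξ j (pathBasis k i₀ r.1 j) = X.component j (X.appPath r.1 ⟨i₀, ξ⟩) := by
  have := (Pi.basisFun k (G.PathFromTo i₀ j)).constr_basis k
    (fun r => X.component j (X.appPath r.1 ⟨i₀, ξ⟩)) r
  rwa [Pi.basisFun_apply, ← pathBasis_eq_single] at this

theorem liftApp_comm (hlen2 : ∀ p, G.rel p → p.length = 2) (hX : SatRel X) (ξ : X.V i₀)
    (a : G.A) (x : (pathRep k i₀).V (G.s a)) :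
    liftApp ξ (G.t a) ((pathRep k i₀).f a x) = X.f a (liftApp ξ (G.s a) x) := by
  refine LinearMap.congr_fun (pathRep_linearMap_ext (f := (liftApp ξ (G.t a)).comp _)
    (g := (X.f a).comp (liftApp ξ (G.s a))) fun r => ?_) x
  simp only [LinearMap.comp_apply, pathRep_f_pathBasis, liftApp_pathBasis]
  split_ifs with hval
  · rw [liftApp_pathBasis ξ (⟨r.1 ++ [a], hval, G.pathEnd_concat _ _ _⟩ : G.PathFromTo i₀ (G.t a)),
      X.appPath_append,
      X.component_appPath_singleton _ ((X.appPath_fst _ _ _).trans r.2.2)]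
  · obtain ⟨z, hz, hza⟩ : ∃ z ∈ r.1.getLast?, G.rel [z, a] := by
      by_contra! h
      exact hval (r.2.1.concat hlen2 r.2.2 h)
    obtain ⟨r₀, hr₀⟩ := List.getLast?_eq_some_iff.1 hz
    have hend : G.t z = G.s a := by simpa [hr₀] using r.2.2
    rw [map_zero, hr₀, X.appPath_append, X.f_component_appPath_of_rel hX hza hend]

end pathRep

def pathRep.lift (hlen2 : ∀ p, G.rel p → p.length = 2) (hX : SatRel X) (ξ : X.V i₀) :
    RepHom (pathRep k i₀) X where
  app := pathRep.liftApp ξ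
  comm := pathRep.liftApp_comm hlen2 hX ξ

theorem isProjectiveRep_pathRep (hlen2 : ∀ p, G.rel p → p.length = 2) :
    IsProjectiveRep (pathRep k i₀) := by
  refine ⟨satRel_pathRep hlen2, fun X Y hX _ e he g => ?_⟩
  obtain ⟨ξ, hξ⟩ := he i₀ (g.app i₀ (pathBasis k i₀ [] i₀))
  refine ⟨pathRep.lift hlen2 hX ξ, fun j x => LinearMap.congr_fun
    (pathRep_linearMap_ext (f := (e.app j).comp (pathRep.liftApp ξ j)) (g := g.app j)
      fun r => ?_) x⟩
  rw [LinearMap.comp_apply, pathRep.liftApp_pathBasis, e.component_map, ← e.appPath_map, hξ,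
    g.apply_pathBasis _ r.2]

end PathModule

/-! ### Factoring through `P(s β)` -/

section BackPathMap

variable {k : Type} [Field k] {G : GQ} {s₀ : G.V} {v : List (Letter G)} {β : G.A} {t : ℕ}

variable (k s₀ v β t) in
def backPathMap (i : G.V) : (stringRep k G s₀ v).V i →ₗ[k] (pathRep k (G.s β)).V i :=
  (Pi.basisFun k (G.Pos s₀ v i)).constr k fun p =>
    if (p.1 : ℕ) ≤ t then pathBasis k (G.s β) (GQ.backPath β v t p.1) i else 0

theorem backPathMap_stringBasis {n : ℕ} (hn : n ≤ v.length) {i : G.V}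
    (hi : G.vtxN s₀ v n = i) :
    backPathMap k s₀ v β t i (stringBasis k s₀ v n i) =
      if n ≤ t then pathBasis k (G.s β) (GQ.backPath β v t n) i else 0 := by
  have := (Pi.basisFun k (G.Pos s₀ v i)).constr_basis k (fun p =>
    if (p.1 : ℕ) ≤ t then pathBasis k (G.s β) (GQ.backPath β v t p.1) i else 0)
    ⟨⟨n, by omega⟩, hi⟩
  rwa [Pi.basisFun_apply, ← stringBasis_eq_single] at this

theorem backPathMap_comm (hlen2 : ∀ p, G.rel p → p.length = 2)
    (hG3 : ∀ a b c : G.A, G.t a = G.s b → G.t a = G.s c → ¬ G.rel [a, b] → ¬ G.rel [a, c] →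
      b = c)
    (hv : G.IsStringWord v) (ht : t ≤ v.length) (hinv : G.IsInverseWord (v.take t))
    (hnext : ∀ c, v[t]? ≠ some (.inv c))
    (hdeep : ∀ c e, v.head? = some (.inv c) → G.s e = G.t c → G.rel [c, e])
    (ht0 : 0 < t) (hβ : G.t β = G.vtxN s₀ v t)
    (hβrel : ¬ G.rel [β, (v[t - 1]'(by omega)).arrow]) (e : G.A)
    (x : (stringRep k G s₀ v).V (G.s e)) :
    backPathMap k s₀ v β t (G.t e) ((stringRep k G s₀ v).f e x) =
      (pathRep k (G.s β)).f e (backPathMap k s₀ v β t (G.s e) x) := by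
  refine LinearMap.congr_fun (stringRep_linearMap_ext
    (f := (backPathMap k s₀ v β t (G.t e)).comp ((stringRep k G s₀ v).f e))
    (g := ((pathRep k (G.s β)).f e).comp (backPathMap k s₀ v β t (G.s e))) fun p => ?_) x
  obtain ⟨⟨n, hn⟩, hvtx⟩ := p
  simp only [LinearMap.comp_apply]
  rw [backPathMap_stringBasis (by omega) hvtx]
  by_cases hext : n ≤ t ∧ G.IsPathFrom (G.s β) (GQ.backPath β v t n ++ [e])
  · obtain ⟨hnt, hval⟩ := hext
    obtain ⟨hn0, hlet⟩ := GQ.exists_getElem_eq_inv_of_isPathFrom_backPath_concat hv ht hinv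
      hG3 hdeep ht0 hβ hβrel hnt hval
    have hlink : G.Link v e n (n - 1) := by
      have := GQ.link_of_getElem?_eq_inv (w := v) (m := n - 1)
        (by rw [List.getElem?_eq_getElem (by omega), hlet])
      rwa [Nat.sub_add_cancel hn0] at this
    obtain ⟨-, -, hpath⟩ := GQ.backPath_eq_concat_of_link (β := β) ht hinv hnext hlink (by omega)
    rw [if_pos hnt, pathRep_f_pathBasis, if_pos hval, stringRep_f_stringBasis_of_link hv.1 hlink,
      backPathMap_stringBasis (by omega) (hlink.vtxN_eq s₀ hv.1).2, if_pos (by omega), hpath]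
  · have hzero : (pathRep k (G.s β)).f e
        (if n ≤ t then pathBasis k (G.s β) (GQ.backPath β v t n) (G.s e) else 0) = 0 := by
      split_ifs with hnt
      · rw [pathRep_f_pathBasis, if_neg fun h => hext ⟨hnt, h⟩]
      · exact map_zero _
    rw [hzero]
    by_cases hL : ∃ n', G.Link v e n n'
    · obtain ⟨n', hL⟩ := hL
      rw [stringRep_f_stringBasis_of_link hv.1 hL,
        backPathMap_stringBasis hL.le_length.2 (hL.vtxN_eq s₀ hv.1).2, if_neg fun hn't => ?_]
      obtain ⟨rfl, hn't, hpath⟩ := GQ.backPath_eq_concat_of_link (β := β) ht hinv hnext hL hn't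
      exact hext ⟨by omega,
        hpath ▸ (GQ.isPathFrom_backPath hv ht hinv hlen2 ht0 hβ hβrel hn't.le).1⟩
    · rw [stringRep_f_stringBasis_eq_zero (not_exists.1 hL), map_zero]

end BackPathMap

section Factorization

variable {k : Type} [Field k] {G : GQ} {s₀v s₀w : G.V} {v w : List (Letter G)} {β : G.A}
  {t lD ρ : ℕ} {τ : ℕ → ℕ}

theorem appPath_backPath_stringBasis (hw : List.IsChain G.Ok w) (ht : t ≤ v.length)
    (hinv : G.IsInverseWord (v.take t))
    (hτ : ∀ p c, lD ≤ p → p < t → v[p]? = some (.inv c) → G.Link w c (τ (p + 1)) (τ p))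
    (hβ : G.Link w β ρ (τ t)) {p : ℕ} (hlp : lD ≤ p) (hpt : p ≤ t) :
    (stringRep k G s₀w w).appPath (GQ.backPath β v t p)
        ⟨G.vtxN s₀w w ρ, stringBasis k s₀w w ρ _⟩ =
      ⟨G.vtxN s₀w w (τ p), stringBasis k s₀w w (τ p) _⟩ := by
  induction hpt using Nat.decreasingInduction with
  | self => rw [GQ.backPath_self]; exact appPath_stringBasis_of_link hw hβ
  | of_succ p hpt ih =>
    obtain ⟨c, hc⟩ := hinv.exists_getElem_eq_inv hpt (by omega)
    rw [GQ.backPath_of_lt hpt ht, Repn.appPath_append, ih (by omega), hc]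
    exact appPath_stringBasis_of_link hw
      (hτ p c hlp hpt (by rw [List.getElem?_eq_getElem (by omega), hc]))

theorem appPath_backPath_stringBasis_snd_eq_zero (hw : List.IsChain G.Ok w) (ht : t ≤ v.length)
    (hinv : G.IsInverseWord (v.take t))
    (hτ : ∀ p c, lD ≤ p → p < t → v[p]? = some (.inv c) → G.Link w c (τ (p + 1)) (τ p))
    (hβ : G.Link w β ρ (τ t)) (hkill : ∀ e q, ¬ G.Link w e (τ lD) q) (hlt : lD ≤ t) {p : ℕ}
    (hp : p < lD) :
    ((stringRep k G s₀w w).appPath (GQ.backPath β v t p)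
        ⟨G.vtxN s₀w w ρ, stringBasis k s₀w w ρ _⟩).2 = 0 := by
  induction hp.le using Nat.decreasingInduction with
  | self => omega
  | of_succ p hp ih =>
    rw [GQ.backPath_of_lt (by omega) ht, Repn.appPath_append]
    rcases (show p + 1 = lD ∨ p + 1 < lD by omega) with hp' | hp'
    · subst hp'
      rw [appPath_backPath_stringBasis hw ht hinv hτ hβ le_rfl hlt]
      exact appPath_stringBasis_snd_eq_zero (hkill _) _
    · exact Repn.appPath_snd_eq_zero _ _ (ih hp')

theorem vtxN_eq_of_links (hv : List.IsChain G.Ok v) (hw : List.IsChain G.Ok w)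
    (ht : t ≤ v.length) (hinv : G.IsInverseWord (v.take t)) (hlt : lD < t)
    (hτ : ∀ p c, lD ≤ p → p < t → v[p]? = some (.inv c) → G.Link w c (τ (p + 1)) (τ p))
    {p : ℕ} (hlp : lD ≤ p) (hpt : p ≤ t) : G.vtxN s₀w w (τ p) = G.vtxN s₀v v p := by
  have hletter : ∀ q, lD ≤ q → q < t →
      G.vtxN s₀w w (τ q) = G.vtxN s₀v v q ∧
        G.vtxN s₀w w (τ (q + 1)) = G.vtxN s₀v v (q + 1) := fun q hlq hqt => by
    obtain ⟨c, hc⟩ := hinv.exists_getElem_eq_inv hqt (by omega)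
    have hc' : v[q]? = some (.inv c) := by rw [List.getElem?_eq_getElem (by omega), hc]
    obtain ⟨hw₁, hw₂⟩ := (hτ q c hlq hqt hc').vtxN_eq s₀w hw
    obtain ⟨hv₁, hv₂⟩ := (GQ.link_of_getElem?_eq_inv hc').vtxN_eq s₀v hv
    exact ⟨hw₂.trans hv₂.symm, hw₁.trans hv₁.symm⟩
  rcases hpt.lt_or_eq with hpt | rfl
  · exact (hletter p hlp hpt).1
  · simpa [Nat.sub_add_cancel (show 0 < p by omega)] using
      (hletter (p - 1) (by omega) (by omega)).2

theorem not_rel_of_links (hw : G.IsStringWord w) (ht : t ≤ v.length)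
    (hinv : G.IsInverseWord (v.take t)) (hlt : lD < t)
    (hτ : ∀ p c, lD ≤ p → p < t → v[p]? = some (.inv c) → G.Link w c (τ (p + 1)) (τ p))
    (hβ : G.Link w β ρ (τ t)) : ¬ G.rel [β, (v[t - 1]'(by omega)).arrow] := by
  obtain ⟨c, hc⟩ := hinv.exists_getElem_eq_inv (p := t - 1) (by omega) (by omega)
  have hlast := hτ (t - 1) c (by omega) (by omega)
    (by rw [List.getElem?_eq_getElem (by omega), hc])
  rw [Nat.sub_add_cancel (by omega)] at hlast
  rw [hc]
  exact hw.not_rel_of_link_of_link hβ hlast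

/-- The composite `M(v) → P(s β) → M(w)` agrees with `f_p` on basis vectors
(compare `CanonicalApp.apply_stringBasis`). -/
theorem liftApp_backPathMap_stringBasis [∀ j, Finite (G.PathFromTo (G.s β) j)]
    (hlen2 : ∀ p, G.rel p → p.length = 2) (hv : G.IsStringWord v) (hw : G.IsStringWord w)
    (ht : t ≤ v.length) (hinv : G.IsInverseWord (v.take t)) (hlt : lD < t)
    (hτ : ∀ p c, lD ≤ p → p < t → v[p]? = some (.inv c) → G.Link w c (τ (p + 1)) (τ p))
    (hβ : G.Link w β ρ (τ t)) (hkill : ∀ e q, ¬ G.Link w e (τ lD) q) {n : ℕ}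
    (hn : n ≤ v.length) {i : G.V} (hni : G.vtxN s₀v v n = i) :
    pathRep.liftApp (stringBasis k s₀w w ρ (G.s β)) i
        (backPathMap k s₀v v β t i (stringBasis k s₀v v n i)) =
      if lD ≤ n ∧ n ≤ t then stringBasis k s₀w w (τ n) i else 0 := by
  rw [backPathMap_stringBasis hn hni]
  by_cases hnt : n ≤ t
  · have hβt : G.t β = G.vtxN s₀v v t :=
      (hβ.vtxN_eq s₀w hw.1).2.symm.trans (vtxN_eq_of_links hv.1 hw.1 ht hinv hlt hτ hlt.le le_rfl)
    have hpath := GQ.isPathFrom_backPath hv ht hinv hlen2 (by omega) hβt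
      (not_rel_of_links hw ht hinv hlt hτ hβ) hnt
    rw [if_pos hnt, pathRep.liftApp_pathBasis _ ⟨_, hpath.1, hpath.2.trans hni⟩,
      Repn.sigma_mk_eq _ (stringBasis k s₀w w ρ) (hβ.vtxN_eq s₀w hw.1).1.symm]
    by_cases hln : lD ≤ n
    · rw [appPath_backPath_stringBasis hw.1 ht hinv hτ hβ hln hnt, if_pos ⟨hln, hnt⟩,
        Repn.sigma_mk_eq _ _ ((vtxN_eq_of_links hv.1 hw.1 ht hinv hlt hτ hln hnt).trans hni),
        Repn.component_mk]
    · rw [Repn.component_eq_zero _ (appPath_backPath_stringBasis_snd_eq_zero hw.1 ht hinv hτ hβ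
        hkill hlt.le (by omega)), if_neg (by omega)]
  · rw [if_neg hnt, map_zero, if_neg (by omega)]

theorem factorsThroughProj_of_backPath (hlen2 : ∀ p, G.rel p → p.length = 2)
    (hG3 : ∀ a b c : G.A, G.t a = G.s b → G.t a = G.s c → ¬ G.rel [a, b] → ¬ G.rel [a, c] →
      b = c)
    (hfin : {p : List G.A | List.IsChain (fun a b => G.t a = G.s b) p ∧
      ∀ q, G.rel q → ¬ q <:+: p}.Finite)
    (hv : G.IsStringWord v) (hw : G.IsStringWord w) (ht : t ≤ v.length)
    (hinv : G.IsInverseWord (v.take t)) (hnext : ∀ c, v[t]? ≠ some (.inv c))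
    (hdeep : ∀ c e, v.head? = some (.inv c) → G.s e = G.t c → G.rel [c, e]) (hlt : lD < t)
    (hτ : ∀ p c, lD ≤ p → p < t → v[p]? = some (.inv c) → G.Link w c (τ (p + 1)) (τ p))
    (hβ : G.Link w β ρ (τ t)) (hkill : ∀ e q, ¬ G.Link w e (τ lD) q)
    (φ : RepHom (stringRep k G s₀v v) (stringRep k G s₀w w))
    (hφ : ∀ i (p : G.Pos s₀v v i), φ.app i (stringBasis k s₀v v p.1 i) =
      if lD ≤ (p.1 : ℕ) ∧ (p.1 : ℕ) ≤ t then stringBasis k s₀w w (τ p.1) i else 0) :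
    FactorsThroughProj φ := by
  have hβt : G.t β = G.vtxN s₀v v t :=
    (hβ.vtxN_eq s₀w hw.1).2.symm.trans (vtxN_eq_of_links hv.1 hw.1 ht hinv hlt hτ hlt.le le_rfl)
  have := G.finite_pathFromTo hfin (G.s β)
  let g : RepHom (stringRep k G s₀v v) (pathRep k (G.s β)) :=
    ⟨backPathMap k s₀v v β t, backPathMap_comm hlen2 hG3 hv ht hinv hnext hdeep (by omega) hβt
      (not_rel_of_links hw ht hinv hlt hτ hβ)⟩
  let h := pathRep.lift hlen2 (satRel_stringRep hlen2 hw) (stringBasis k s₀w w ρ (G.s β))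
  refine ⟨pathRep k (G.s β), g, h, isProjectiveRep_pathRep hlen2, fun i x =>
    LinearMap.congr_fun (stringRep_linearMap_ext (f := (h.app i).comp (g.app i))
      (g := φ.app i) fun p => ?_) x⟩
  rw [hφ, LinearMap.comp_apply]
  exact liftApp_backPathMap_stringBasis hlen2 hv hw ht hinv hlt hτ hβ hkill (by omega) p.2

end Factorization

section CanonicalMap

variable {k : Type} [Field k] {G : GQ} {s₀v s₀w : G.V} {v w : List (Letter G)}

theorem CanonicalApp.apply_stringBasis {lD lD' lE : ℕ} {rev : Bool}
    {φ : RepHom (stringRep k G s₀v v) (stringRep k G s₀w w)}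
    (hφ : CanonicalApp k G s₀v v s₀w w lD lD' lE rev φ) {i : G.V} (p : G.Pos s₀v v i) :
    φ.app i (stringBasis k s₀v v p.1 i) =
      if lD ≤ (p.1 : ℕ) ∧ (p.1 : ℕ) ≤ lD + lE then
        stringBasis k s₀w w (if rev then lD' + (lE - (p.1 - lD)) else lD' + (p.1 - lD)) i
      else 0 := by
  funext q
  rw [hφ]
  have key : (lD' ≤ (q.1 : ℕ) ∧ (q.1 : ℕ) ≤ lD' + lE ∧
      (p.1 : ℕ) = if rev then lD + (lE - (q.1 - lD')) else lD + (q.1 - lD')) ↔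
      (lD ≤ (p.1 : ℕ) ∧ (p.1 : ℕ) ≤ lD + lE ∧
        (q.1 : ℕ) = if rev then lD' + (lE - (p.1 - lD)) else lD' + (p.1 - lD)) := by
    cases rev <;> simp only [Bool.false_eq_true, if_true, if_false] <;> omega
  generalize (if rev then lD + (lE - ((q.1 : ℕ) - lD')) else lD + ((q.1 : ℕ) - lD')) = F at key ⊢
  generalize (if rev then lD' + (lE - ((p.1 : ℕ) - lD)) else lD' + ((p.1 : ℕ) - lD)) = T at key ⊢
  by_cases hpq : lD ≤ (p.1 : ℕ) ∧ (p.1 : ℕ) ≤ lD + lE ∧ (q.1 : ℕ) = T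
  · have hex : ∃ p' : G.Pos s₀v v i, lD' ≤ (q.1 : ℕ) ∧ (q.1 : ℕ) ≤ lD' + lE ∧ (p'.1 : ℕ) = F :=
      ⟨p, key.2 hpq⟩
    have := hex.choose_spec.2.2
    have := (key.2 hpq).2.2
    rw [dif_pos hex, if_pos ⟨hpq.1, hpq.2.1⟩]
    simp only [stringBasis]
    rw [if_pos hpq.2.2, if_pos (by omega)]
  · rw [dite_eq_right_iff.2 fun hex => ?_]
    · by_cases hr : lD ≤ (p.1 : ℕ) ∧ (p.1 : ℕ) ≤ lD + lE
      · rw [if_pos hr]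
        simp only [stringBasis]
        rw [if_neg fun h => hpq ⟨hr.1, hr.2, h⟩]
      · rw [if_neg hr]
        rfl
    · simp only [stringBasis]
      rw [if_neg]
      intro h
      exact hpq (key.1 (h ▸ hex.choose_spec))

end CanonicalMap

section Segment

variable {k : Type} [Field k] {G : GQ} {s₀v s₀w : G.V} {D E v₀ : List (Letter G)} {a : G.A}

theorem factorsThroughProj_of_segment {w : List (Letter G)} {β : G.A} {ρ : ℕ} {τ : ℕ → ℕ}
    (hlen2 : ∀ p, G.rel p → p.length = 2)
    (hG3 : ∀ a b c : G.A, G.t a = G.s b → G.t a = G.s c → ¬ G.rel [a, b] → ¬ G.rel [a, c] →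
      b = c)
    (hfin : {p : List G.A | List.IsChain (fun a b => G.t a = G.s b) p ∧
      ∀ q, G.rel q → ¬ q <:+: p}.Finite)
    (hv : G.IsStringWord (D ++ E ++ .ar a :: v₀)) (hw : G.IsStringWord w)
    (hinv : G.IsInverseWord (D ++ E))
    (hdeep : ∀ c e, (D ++ E).head? = some (.inv c) → G.s e = G.t c → G.rel [c, e])
    (hE : E ≠ [])
    (hτ : ∀ j c, E[j]? = some (.inv c) → G.Link w c (τ (D.length + j + 1)) (τ (D.length + j)))
    (hβ : G.Link w β ρ (τ (D.length + E.length))) (hkill : ∀ e q, ¬ G.Link w e (τ D.length) q)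
    (φ : RepHom (stringRep k G s₀v (D ++ E ++ .ar a :: v₀)) (stringRep k G s₀w w))
    (hφ : ∀ i (p : G.Pos s₀v (D ++ E ++ .ar a :: v₀) i),
      φ.app i (stringBasis k s₀v _ p.1 i) =
        if D.length ≤ (p.1 : ℕ) ∧ (p.1 : ℕ) ≤ D.length + E.length then
          stringBasis k s₀w w (τ p.1) i
        else 0) :
    FactorsThroughProj φ := by
  have hE0 : 0 < E.length := List.length_pos_iff.2 hE
  refine factorsThroughProj_of_backPath hlen2 hG3 hfin hv hw (by simp) ?_ ?_
    (by rwa [List.head?_append_of_ne_nil _ (by simp [hE])]) (by omega) ?_ hβ hkill φ hφ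
  · rwa [List.take_left' List.length_append]
  · simp
  · intro p c hDp hpE hc
    obtain ⟨j, rfl⟩ := Nat.exists_eq_add_of_le hDp
    exact hτ j c (by simpa [List.getElem?_append_left, List.getElem?_append_right,
      show j < E.length by omega] using hc)

variable {Ua D' F' : List (Letter G)} {b : G.A}

theorem factorsThroughProj_of_canonicalApp_of_eq (hG : G.IsGentle)
    (hv : G.IsStringWord (D ++ E ++ .ar a :: v₀)) (hN : G.NCond a (D ++ E) Ua) (hE : E ≠ [])
    (hw : G.IsStringWord (D' ++ E ++ F')) (hD' : D' = [] ∨ ∃ c, D'.getLast? = some (.ar c))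
    (hb : F'.head? = some (.inv b))
    (φ : RepHom (stringRep k G s₀v (D ++ E ++ .ar a :: v₀)) (stringRep k G s₀w (D' ++ E ++ F')))
    (hφ : CanonicalApp k G s₀v _ s₀w _ D.length D'.length E.length false φ) :
    FactorsThroughProj φ := by
  obtain ⟨⟨-, -, hG3, -⟩, hlen2, -, -, hfin⟩ := hG
  refine factorsThroughProj_of_segment (τ := fun p => D'.length + (p - D.length)) (β := b)
    (ρ := D'.length + E.length + 1) hlen2 hG3 hfin hv hw hN.1
    (fun c e hc he => hN.rel_of_head? hlen2 hc he) hE (fun j c hc => ?_) ?_ ?_ φ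
    fun i p => by simpa using hφ.apply_stringBasis p
  · have hj : j < E.length := (List.getElem?_eq_some_iff.1 hc).1
    simpa [Nat.add_assoc] using GQ.link_of_getElem?_eq_inv (w := D' ++ E ++ F')
      (m := D'.length + j)
      (by simpa [List.getElem?_append_left, List.getElem?_append_right, hj] using hc)
  · simpa using GQ.link_of_getElem?_eq_inv (w := D' ++ E ++ F') (m := D'.length + E.length)
      (by simpa [List.getElem?_append_right, List.head?_eq_getElem?] using hb)
  · obtain ⟨c₀, hc₀⟩ := hN.1.exists_head?_eq_inv_right hE
    refine fun e q => GQ.not_link_of_sink (fun c => ?_) (fun m c hm => ?_)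
    · simp only [Nat.sub_self, Nat.add_zero, List.append_assoc, List.getElem?_append_right le_rfl,
        List.getElem?_append_left (List.length_pos_iff.2 hE), ← List.head?_eq_getElem?,
        hc₀, ne_eq, Option.some.injEq, reduceCtorEq, not_false_eq_true]
    · obtain ⟨c', hc'⟩ := hD'.resolve_left (by rintro rfl; simp at hm)
      simp only [Nat.sub_self, Nat.add_zero] at hm
      rw [List.getLast?_eq_getElem?, hm, Nat.add_sub_cancel] at hc'
      rw [List.append_assoc, List.getElem?_append_left (by omega), hc']
      simp

theorem factorsThroughProj_of_canonicalApp_of_eq_strInv (hG : G.IsGentle)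
    (hv : G.IsStringWord (D ++ E ++ .ar a :: v₀)) (hN : G.NCond a (D ++ E) Ua) (hE : E ≠ [])
    (hw : G.IsStringWord (D' ++ strInv E ++ F')) (hb : D'.getLast? = some (.ar b))
    (hF' : F' = [] ∨ ∃ c, F'.head? = some (.inv c))
    (φ : RepHom (stringRep k G s₀v (D ++ E ++ .ar a :: v₀))
      (stringRep k G s₀w (D' ++ strInv E ++ F')))
    (hφ : CanonicalApp k G s₀v _ s₀w _ D.length D'.length E.length true φ) :
    FactorsThroughProj φ := by
  obtain ⟨⟨-, -, hG3, -⟩, hlen2, -, -, hfin⟩ := hG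
  have hD' : 0 < D'.length := List.length_pos_iff.2 (by rintro rfl; simp at hb)
  have hE0 : 0 < E.length := List.length_pos_iff.2 hE
  have hlen : (strInv E).length = E.length := by simp [strInv]
  refine factorsThroughProj_of_segment (τ := fun p => D'.length + (E.length - (p - D.length)))
    (β := b) (ρ := D'.length - 1) hlen2 hG3 hfin hv hw hN.1
    (fun c e hc he => hN.rel_of_head? hlen2 hc he) hE (fun j c hc => ?_) ?_ ?_ φ
    fun i p => by simpa using hφ.apply_stringBasis p
  · have hj : j < E.length := (List.getElem?_eq_some_iff.1 hc).1
    have := GQ.link_of_getElem?_eq_ar (w := D' ++ strInv E ++ F') (a := c)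
      (m := D'.length + (E.length - 1 - j)) (by
        rw [List.append_assoc, List.getElem?_append_right (by omega), Nat.add_sub_cancel_left,
          List.getElem?_append_left (by omega), getElem?_strInv (by omega),
          show E.length - 1 - (E.length - 1 - j) = j by omega, hc]
        rfl)
    rwa [show D.length + j + 1 - D.length = j + 1 by omega,
      show D.length + j - D.length = j by omega,
      show E.length - (j + 1) = E.length - 1 - j by omega,
      show E.length - j = E.length - 1 - j + 1 by omega, ← Nat.add_assoc]
  · show G.Link _ b _ (D'.length + (E.length - (D.length + E.length - D.length)))
    rw [show D'.length + (E.length - (D.length + E.length - D.length)) = D'.length - 1 + 1 by omega]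
    exact GQ.link_of_getElem?_eq_ar (by
      rw [List.append_assoc, List.getElem?_append_left (by omega), ← List.getLast?_eq_getElem?, hb])
  · obtain ⟨c₀, hc₀⟩ := hN.1.exists_head?_eq_inv_right hE
    refine fun e q => GQ.not_link_of_sink (fun c => ?_) (fun m c hm => ?_)
    · rw [show D.length - D.length = 0 by omega, Nat.sub_zero, List.append_assoc,
        List.getElem?_append_right (by omega), Nat.add_sub_cancel_left,
        List.getElem?_append_right (by omega), hlen, Nat.sub_self, ← List.head?_eq_getElem?]
      rcases hF' with rfl | ⟨c', hc'⟩ <;> simp [*]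
    · simp only [Nat.sub_self, Nat.sub_zero] at hm
      rw [List.append_assoc, List.getElem?_append_right (by omega),
        List.getElem?_append_left (by omega), getElem?_strInv (by omega),
        show E.length - 1 - (m - D'.length) = 0 by omega, ← List.head?_eq_getElem?, hc₀]
      simp [Letter.flip]

end Segment

end

theorem stmt6_general (k : Type) [Field k] (G : GQ) (hG : G.IsGentle)
    (s₀w s₀v : G.V) (w v v₀ Va Ua : List (Letter G)) (a : G.A)
    (hw : G.GoodStr s₀w w) (hv : G.GoodStr s₀v v)
    (hdec : v = Va ++ Letter.ar a :: v₀) (hN : G.NCond a Va Ua)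
    (D E F D' E' F' : List (Letter G))
    (hp : G.AdPair s₀v v s₀w w D E F D' E' F')
    (hDE : D ++ E = Va) (hE : E ≠ [])
    (φ : RepHom (stringRep k G s₀v v) (stringRep k G s₀w w)) :
    ((E' = E ∧ F' ≠ []) →
       CanonicalApp k G s₀v v s₀w w D.length D'.length E.length false φ →
       FactorsThroughProj φ) ∧
    ((E' = strInv E ∧ D' ≠ []) →
       CanonicalApp k G s₀v v s₀w w D.length D'.length E.length true φ →
       FactorsThroughProj φ) := by
  subst hdec hDE
  obtain ⟨-, ⟨rfl, hD', hF'⟩, -, -⟩ := hp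
  refine ⟨fun ⟨hE', hF'ne⟩ hφ => ?_, fun ⟨hE', hD'ne⟩ hφ => ?_⟩ <;> subst hE'
  · obtain ⟨b, hb⟩ := hF'.resolve_left hF'ne
    exact factorsThroughProj_of_canonicalApp_of_eq hG hv.1 hN hE hw.1 hD' hb φ hφ
  · obtain ⟨b, hb⟩ := hD'.resolve_left hD'ne
    exact factorsThroughProj_of_canonicalApp_of_eq_strInv hG hv.1 hN hE hw.1 hb hF' φ hφ

/-- **Lemma 4.5.** Let `v = V_α α v₀` and let `p = (D,E,F) × (D',E',F') ∈ F(v) × S(w)` be an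
admissible pair with `DE = V_α` and `l(E) > 0`.  If `E = E'` and `l(F') > 0`, or
`E⁻¹ = E'` and `l(D') > 0`, then the canonical homomorphism `f_p : M(v) → M(w)` factors
through a projective module. -/
theorem stmt6 (k : Type) [Field k] [IsAlgClosed k] (G : GQ) (hG : G.IsGentle)
    (s₀w s₀v : G.V) (w v v₀ Va Ua : List (Letter G)) (a : G.A)
    (hw : G.GoodStr s₀w w) (hv : G.GoodStr s₀v v)
    (hdec : v = Va ++ Letter.ar a :: v₀) (hN : G.NCond a Va Ua)
    (D E F D' E' F' : List (Letter G))
    (hp : G.AdPair s₀v v s₀w w D E F D' E' F')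
    (hDE : D ++ E = Va) (hE : E ≠ [])
    (φ : RepHom (stringRep k G s₀v v) (stringRep k G s₀w w)) :
    ((E' = E ∧ F' ≠ []) →
       CanonicalApp k G s₀v v s₀w w D.length D'.length E.length false φ →
       FactorsThroughProj φ) ∧
    ((E' = strInv E ∧ D' ≠ []) →
       CanonicalApp k G s₀v v s₀w w D.length D'.length E.length true φ →
       FactorsThroughProj φ) :=
  stmt6_general k G hG s₀w s₀v w v v₀ Va Ua a hw hv hdec hN D E F D' E' F' hp hDE hE φ
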